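/- Fix 0 < ε < 1, let f be a concave, inverse-concave, strictly increasing smooth symmetric function on Γ₊ ⊂ ℝⁿ, and define φ on Γ₊ ⊂ ℝ^{n-1} by φ(x₂,...,xₙ) = f((ε/(1-ε))(x₂+⋯+xₙ), x₂,...,xₙ). Then φ* defined by φ*(x₂,...,xₙ) = -φ(x₂⁻¹,...,xₙ⁻¹) is concave on the positive cone in ℝ^{n-1}. -/

import Mathlib

noncomputable section

/-- The open positive cone in `ℝⁿ`. -/
def posCone (n : ℕ) : Set (Fin n → ℝ) := {x | ∀ i, 0 < x i}

/-- Coordinatewise inversion. -/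
def invPt {n : ℕ} (x : Fin n → ℝ) : Fin n → ℝ := fun i => (x i)⁻¹

lemma cs2 {u v l m : ℝ} (hu : 0 < u) (hv : 0 < v) (hlm : l + m = 1) :
    (u + v)⁻¹ ≤ l ^ 2 / u + m ^ 2 / v := by
  have hm' : m = 1 - l := by linarith
  subst hm'
  rw [inv_eq_one_div, div_add_div _ _ hu.ne' hv.ne',
    div_le_div_iff₀ (by positivity) (by positivity)]
  nlinarith [sq_nonneg (l * v - (1 - l) * u), mul_pos hu hv]

lemma harm {n : ℕ} (hn : 0 < n) (x y : Fin n → ℝ) (hx : ∀ i, 0 < x i) (hy : ∀ i, 0 < y i)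
    {a b : ℝ} (ha : 0 < a) (hb : 0 < b) (hab : a + b = 1) :
    a * (∑ i, (x i)⁻¹)⁻¹ + b * (∑ i, (y i)⁻¹)⁻¹ ≤ (∑ i, (a * x i + b * y i)⁻¹)⁻¹ := by
  haveI : Nonempty (Fin n) := ⟨⟨0, hn⟩⟩
  have hSxp : 0 < ∑ i, (x i)⁻¹ :=
    Finset.sum_pos (fun i _ => inv_pos.2 (hx i)) Finset.univ_nonempty
  have hSyp : 0 < ∑ i, (y i)⁻¹ :=
    Finset.sum_pos (fun i _ => inv_pos.2 (hy i)) Finset.univ_nonempty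
  set Hx := (∑ i, (x i)⁻¹)⁻¹ with hHx
  set Hy := (∑ i, (y i)⁻¹)⁻¹ with hHy
  have hHxp : 0 < Hx := inv_pos.2 hSxp
  have hHyp : 0 < Hy := inv_pos.2 hSyp
  have hSxH : (∑ i, (x i)⁻¹) = Hx⁻¹ := by rw [hHx, inv_inv]
  have hSyH : (∑ i, (y i)⁻¹) = Hy⁻¹ := by rw [hHy, inv_inv]
  set D := a * Hx + b * Hy with hD
  have hDp : 0 < D := by positivity
  set l := a * Hx / D with hl
  set m := b * Hy / D with hm
  have hlm : l + m = 1 := by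
    rw [hl, hm, ← add_div, hD, div_self hDp.ne']
  have hSz : ∑ i, (a * x i + b * y i)⁻¹ ≤ 1 / D := by
    calc ∑ i, (a * x i + b * y i)⁻¹
        ≤ ∑ i, (l ^ 2 / (a * x i) + m ^ 2 / (b * y i)) := by
          refine Finset.sum_le_sum fun i _ => ?_
          exact cs2 (mul_pos ha (hx i)) (mul_pos hb (hy i)) hlm
      _ = l ^ 2 / a * ∑ i, (x i)⁻¹ + m ^ 2 / b * ∑ i, (y i)⁻¹ := by
          rw [Finset.sum_add_distrib, Finset.mul_sum, Finset.mul_sum]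
          congr 1 <;> refine Finset.sum_congr rfl fun i _ => ?_
          · field_simp [(hx i).ne']
          · field_simp [(hy i).ne']
      _ = 1 / D := by
          rw [hSxH, hSyH, hl, hm, hD]
          field_simp
  have hSzp : 0 < ∑ i, (a * x i + b * y i)⁻¹ :=
    Finset.sum_pos (fun i _ => inv_pos.2 (by nlinarith [hx i, hy i])) Finset.univ_nonempty
  have h2 : (1 / D)⁻¹ ≤ (∑ i, (a * x i + b * y i)⁻¹)⁻¹ := inv_anti₀ hSzp hSz
  rw [one_div, inv_inv] at h2
  exact h2

lemma convex_posCone (n : ℕ) : Convex ℝ (posCone n) := by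
  intro x hx y hy a b ha hb hab i
  simp only [Pi.add_apply, Pi.smul_apply, smul_eq_mul]
  rcases ha.eq_or_lt with h | h
  · have hb1 : b = 1 := by linarith
    simp [← h, hb1]
    exact hy i
  · have h1 : 0 < a * x i := mul_pos h (hx i)
    have h2 : 0 ≤ b * y i := mul_nonneg hb (hy i).le
    linarith

lemma invPt_cons {n : ℕ} (s : ℝ) (w : Fin n → ℝ) :
    invPt (Fin.cons s w) = Fin.cons s⁻¹ (invPt w) := by
  funext i
  refine Fin.cases ?_ (fun j => ?_) i <;> simp [invPt]

lemma cons_comb {n : ℕ} (a b p q : ℝ) (x y : Fin n → ℝ) :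
    a • (Fin.cons p x : Fin (n + 1) → ℝ) + b • (Fin.cons q y : Fin (n + 1) → ℝ)
      = Fin.cons (a * p + b * q) (a • x + b • y) := by
  funext i
  refine Fin.cases ?_ (fun j => ?_) i <;> simp

theorem stmt16 {n : ℕ} (hn : 0 < n) (ε : ℝ) (hε : ε ∈ Set.Ioo (0 : ℝ) 1)
    (f : (Fin (n + 1) → ℝ) → ℝ)
    (hsm : ContDiffOn ℝ (⊤ : ℕ∞) f (posCone (n + 1)))
    (hsym : ∀ σ : Equiv.Perm (Fin (n + 1)), ∀ x ∈ posCone (n + 1), f (x ∘ σ) = f x)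
    (hmono : ∀ x ∈ posCone (n + 1), ∀ i, ∀ t : ℝ, 0 < t →
        f x < f (Function.update x i (x i + t)))
    (hconc : ConcaveOn ℝ (posCone (n + 1)) f)
    (hinv : ConcaveOn ℝ (posCone (n + 1)) (fun x => -f (invPt x))) :
    let φ : (Fin n → ℝ) → ℝ := fun y => f (Fin.cons ((ε / (1 - ε)) * ∑ i, y i) y)
    ConcaveOn ℝ (posCone n) (fun x => -φ (invPt x)) := by
  intro φ
  haveI : Nonempty (Fin n) := ⟨⟨0, hn⟩⟩
  set c : ℝ := ε / (1 - ε) with hcdef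
  have hc : 0 < c := div_pos hε.1 (by linarith [hε.2])
  have hφ : ∀ w : Fin n → ℝ, φ w = f (Fin.cons (c * ∑ i, w i) w) := fun w => rfl
  -- monotonicity of f in the first coordinate
  have hmono' : ∀ v : Fin n → ℝ, (∀ i, 0 < v i) → ∀ u u' : ℝ, 0 < u → u ≤ u' →
      f (Fin.cons u v) ≤ f (Fin.cons u' v) := by
    intro v hv u u' hu huu
    rcases eq_or_lt_of_le huu with h | h
    · rw [h]
    · have hpos : (Fin.cons u v : Fin (n + 1) → ℝ) ∈ posCone (n + 1) := by
        intro i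
        refine Fin.cases ?_ (fun j => ?_) i
        · simpa using hu
        · simpa using hv j
      have hkey := hmono _ hpos 0 (u' - u) (by linarith)
      have hupd : Function.update (Fin.cons u v : Fin (n + 1) → ℝ) 0
          ((Fin.cons u v : Fin (n + 1) → ℝ) 0 + (u' - u)) = Fin.cons u' v := by
        funext i
        refine Fin.cases ?_ (fun j => ?_) i
        · simp
        · simp [Function.update_of_ne (Fin.succ_ne_zero j)]
      rw [hupd] at hkey
      exact hkey.le
  -- rewrite of the target function
  have hrw : ∀ w : Fin n → ℝ, (∀ i, 0 < w i) →
      -φ (invPt w) = -f (invPt (Fin.cons ((c * ∑ i, (w i)⁻¹)⁻¹) w)) := by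
    intro w hw
    rw [hφ, invPt_cons, inv_inv]
    rfl
  refine ⟨convex_posCone n, ?_⟩
  intro x hx y hy a b ha hb hab
  simp only [smul_eq_mul]
  -- trivial cases
  rcases ha.eq_or_lt with h | hA
  · have hb1 : b = 1 := by linarith
    simp [← h, hb1]
  rcases hb.eq_or_lt with h | hB
  · have ha1 : a = 1 := by linarith
    simp [← h, ha1]
  -- main case
  have hxp : ∀ i, 0 < x i := hx
  have hyp : ∀ i, 0 < y i := hy
  have hzmem : a • x + b • y ∈ posCone n := convex_posCone n hx hy ha hb hab
  have hzp : ∀ i, 0 < (a • x + b • y) i := hzmem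
  have hSxp : 0 < ∑ i, (x i)⁻¹ :=
    Finset.sum_pos (fun i _ => inv_pos.2 (hxp i)) Finset.univ_nonempty
  have hSyp : 0 < ∑ i, (y i)⁻¹ :=
    Finset.sum_pos (fun i _ => inv_pos.2 (hyp i)) Finset.univ_nonempty
  have hSzp : 0 < ∑ i, ((a • x + b • y) i)⁻¹ :=
    Finset.sum_pos (fun i _ => inv_pos.2 (hzp i)) Finset.univ_nonempty
  set ψx : ℝ := (c * ∑ i, (x i)⁻¹)⁻¹ with hψx
  set ψy : ℝ := (c * ∑ i, (y i)⁻¹)⁻¹ with hψy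
  set ψz : ℝ := (c * ∑ i, ((a • x + b • y) i)⁻¹)⁻¹ with hψz
  have hψxp : 0 < ψx := inv_pos.2 (mul_pos hc hSxp)
  have hψyp : 0 < ψy := inv_pos.2 (mul_pos hc hSyp)
  have hψzp : 0 < ψz := inv_pos.2 (mul_pos hc hSzp)
  -- harmonic mean concavity (with constant c)
  have hharm : a * ψx + b * ψy ≤ ψz := by
    have hsum : ∑ i, ((a • x + b • y) i)⁻¹ = ∑ i, (a * x i + b * y i)⁻¹ := by
      refine Finset.sum_congr rfl fun i _ => ?_
      simp [mul_comm]
    have h0 := harm hn x y hxp hyp hA hB hab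
    have : c⁻¹ * (a * (∑ i, (x i)⁻¹)⁻¹ + b * (∑ i, (y i)⁻¹)⁻¹)
        ≤ c⁻¹ * (∑ i, (a * x i + b * y i)⁻¹)⁻¹ :=
      mul_le_mul_of_nonneg_left h0 (inv_pos.2 hc).le
    rw [hψx, hψy, hψz, hsum]
    rw [mul_inv, mul_inv, mul_inv]
    calc a * (c⁻¹ * (∑ i, (x i)⁻¹)⁻¹) + b * (c⁻¹ * (∑ i, (y i)⁻¹)⁻¹)
        = c⁻¹ * (a * (∑ i, (x i)⁻¹)⁻¹ + b * (∑ i, (y i)⁻¹)⁻¹) := by ring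
      _ ≤ c⁻¹ * (∑ i, (a * x i + b * y i)⁻¹)⁻¹ := this
  -- membership of the lifted points
  have hmemcons : ∀ (s : ℝ) (w : Fin n → ℝ), 0 < s → (∀ i, 0 < w i) →
      (Fin.cons s w : Fin (n + 1) → ℝ) ∈ posCone (n + 1) := by
    intro s w hs hw i
    refine Fin.cases ?_ (fun j => ?_) i
    · simpa using hs
    · simpa using hw j
  -- concavity step via hinv
  have hstep1 := hinv.2 (hmemcons ψx x hψxp hxp) (hmemcons ψy y hψyp hyp) ha hb hab
  simp only [smul_eq_mul] at hstep1
  rw [cons_comb] at hstep1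
  -- monotonicity step
  have hstep2 : -f (invPt (Fin.cons (a * ψx + b * ψy) (a • x + b • y)))
      ≤ -f (invPt (Fin.cons ψz (a • x + b • y))) := by
    rw [invPt_cons, invPt_cons]
    have hDp : 0 < a * ψx + b * ψy := by positivity
    have hinva : ψz⁻¹ ≤ (a * ψx + b * ψy)⁻¹ := inv_anti₀ hDp hharm
    have hvp : ∀ i, 0 < invPt (a • x + b • y) i := fun i => inv_pos.2 (hzp i)
    have := hmono' (invPt (a • x + b • y)) hvp ψz⁻¹ (a * ψx + b * ψy)⁻¹
      (inv_pos.2 hψzp) hinva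
    linarith
  -- assemble
  rw [hrw x hxp, hrw y hyp, hrw _ hzp]
  have hsx : ∑ i, invPt x i = ∑ i, (x i)⁻¹ := rfl
  calc a * -f (invPt (Fin.cons ψx x)) + b * -f (invPt (Fin.cons ψy y))
      ≤ -f (invPt (Fin.cons (a * ψx + b * ψy) (a • x + b • y))) := hstep1
    _ ≤ -f (invPt (Fin.cons ψz (a • x + b • y))) := hstep2
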